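/- arXiv:2605.08899 — 2 statements merged into one kernel-verified Lean document; each statement's English description precedes it below -/
import Mathlib

section
/- Let G₁, G₂ : ℝ → ℝ be continuous monotone non-decreasing functions with values in [0,1] satisfying Gᵢ(x) = 1 - Gᵢ(-x) for all x ∈ ℝ (i = 1,2), and let a > 0. Then ∫_{-a}^{a} ∫_{-1/a}^{1/a} G₁(x)G₂(y)/(1 + x²y²) dy dx = G, where G = ∑_{n=0}^∞ (-1)^n/(2n+1)² is Catalan's constant. -/
/-!
By the symmetry `G(x) + G(-x) = 1`, integrating `G` against an even function over a symmetric
interval gives half the integral of that function, so both weights contribute a factor `1/2`.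
The remaining integral of `1 / (1 + x²y²)` over `[-a, a] × [-1/a, 1/a]` is computed in `y`
as `2 arctan(x/a) / x`, and the substitution `x = a t` reduces it to `4 ∫₀¹ arctan t / t dt`.
Integrating the alternating power series of `arctan t / t` term by term gives Catalan's constant;
dominated convergence applies because partial sums of an alternating series with decreasing terms
are bounded.
-/

open Real Finset Filter Topology MeasureTheory
open scoped Interval

theorem abs_sum_range_alternating_le {E : Type*} [Ring E] [LinearOrder E] [IsOrderedRing E]
    [UniformSpace E] [IsUniformAddGroup E] [CompleteSpace E] [OrderClosedTopology E]
    {f : ℕ → E} (hfa : Antitone f) (hfs : Summable f) (n : ℕ) :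
    |∑ i ∈ range n, (-1) ^ i * f i| ≤ 2 * f 0 := by
  set l := ∑' i, (-1) ^ i * f i
  have hn := alternating_series_error_bound f hfa hfs n
  have h0 := alternating_series_error_bound f hfa hfs 0
  rw [range_zero, sum_empty, sub_zero] at h0
  calc |∑ i ∈ range n, (-1) ^ i * f i|
      = |l - (l - ∑ i ∈ range n, (-1) ^ i * f i)| := by rw [sub_sub_cancel]
    _ ≤ |l| + |l - ∑ i ∈ range n, (-1) ^ i * f i| := abs_sub _ _
    _ ≤ f 0 + f 0 := add_le_add h0 (hn.trans (hfa n.zero_le))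
    _ = 2 * f 0 := (two_mul _).symm

theorem Real.hasSum_arctan_div_self {t : ℝ} (ht0 : t ≠ 0) (ht : |t| < 1) :
    HasSum (fun n : ℕ => (-1) ^ n * (t ^ (2 * n) / (2 * n + 1))) (arctan t / t) := by
  have hterm (n : ℕ) : (-1) ^ n * t ^ (2 * n + 1) / ↑(2 * n + 1) / t
      = (-1) ^ n * (t ^ (2 * n) / (2 * n + 1)) := by
    push_cast
    field_simp
    ring
  simpa only [hterm] using (Real.hasSum_arctan ht).div_const t

theorem summable_one_div_two_mul_add_one_sq :
    Summable fun n : ℕ => 1 / (2 * n + 1 : ℝ) ^ 2 := by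
  have := (Real.summable_one_div_nat_pow.mpr one_lt_two).comp_injective
    (i := fun n : ℕ => 2 * n + 1) (fun m n h => by simpa using h)
  simpa [Function.comp_def] using this

theorem Real.abs_sum_range_arctan_div_self_le {t : ℝ} (ht : |t| < 1) (N : ℕ) :
    |∑ n ∈ range N, (-1) ^ n * (t ^ (2 * n) / (2 * n + 1))| ≤ 2 := by
  have ht2 : t ^ 2 < 1 := by rwa [sq_lt_one_iff_abs_lt_one]
  have hterm (n : ℕ) : t ^ (2 * n) / (2 * n + 1) = (t ^ 2) ^ n / (2 * n + 1) := by rw [pow_mul]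
  simp only [hterm]
  have hanti : Antitone fun n : ℕ => (t ^ 2) ^ n / (2 * n + 1) := fun m n hmn => by
    have hmn' : (m : ℝ) ≤ n := by exact_mod_cast hmn
    exact div_le_div₀ (by positivity) (pow_le_pow_of_le_one (sq_nonneg t) ht2.le hmn)
      (by positivity) (by linarith)
  have hsum : Summable fun n : ℕ => (t ^ 2) ^ n / (2 * n + 1) :=
    (summable_geometric_of_lt_one (sq_nonneg t) ht2).of_nonneg_of_le (fun n => by positivity)
      fun n => div_le_self (by positivity) (by linarith [n.cast_nonneg (α := ℝ)])
  simpa using abs_sum_range_alternating_le hanti hsum N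

theorem integral_arctan_div_self :
    ∫ t in (0 : ℝ)..1, arctan t / t = ∑' n : ℕ, (-1 : ℝ) ^ n / (2 * n + 1) ^ 2 := by
  set F : ℕ → ℝ → ℝ := fun N t => ∑ n ∈ range N, (-1) ^ n * (t ^ (2 * n) / (2 * n + 1))
  have hF_int (N : ℕ) :
      ∫ t in (0 : ℝ)..1, F N t = ∑ n ∈ range N, (-1) ^ n * (1 / (2 * n + 1 : ℝ) ^ 2) := by
    rw [intervalIntegral.integral_finsetSum fun n _ =>
      Continuous.intervalIntegrable (by fun_prop) _ _]
    refine sum_congr rfl fun n _ => ?_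
    rw [intervalIntegral.integral_const_mul, intervalIntegral.integral_div, integral_pow]
    push_cast
    field_simp
    ring
  have h_interior : ∀ᵐ t : ℝ, t ∈ Ι (0 : ℝ) 1 → t ≠ 0 ∧ |t| < 1 := by
    filter_upwards [volume.ae_ne 1] with t ht1 ht
    rw [Set.uIoc_of_le zero_le_one] at ht
    exact ⟨ht.1.ne', abs_lt.2 ⟨by linarith [ht.1], lt_of_le_of_ne ht.2 ht1⟩⟩
  have hF_lim : Tendsto (fun N => ∫ t in (0 : ℝ)..1, F N t) atTop
      (𝓝 (∫ t in (0 : ℝ)..1, arctan t / t)) := by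
    refine intervalIntegral.tendsto_integral_filter_of_dominated_convergence (fun _ => 2)
      (.of_forall fun N => (Continuous.aestronglyMeasurable (by fun_prop)))
      (.of_forall fun N => ?_) intervalIntegrable_const ?_
    · filter_upwards [h_interior] with t ht ht_mem
      exact Real.abs_sum_range_arctan_div_self_le (ht ht_mem).2 N
    · filter_upwards [h_interior] with t ht ht_mem
      exact (Real.hasSum_arctan_div_self (ht ht_mem).1 (ht ht_mem).2).tendsto_sum_nat
  simp only [hF_int] at hF_lim
  simpa only [mul_one_div] using
    tendsto_nhds_unique hF_lim summable_one_div_two_mul_add_one_sq.tendsto_alternating_series_tsum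

theorem intervalIntegral.integral_neg_self_eq_two_nsmul_of_even {E : Type*}
    [NormedAddCommGroup E] [NormedSpace ℝ E] {f : ℝ → E} {a : ℝ}
    (hf : ∀ x, f (-x) = f x) (hint : IntervalIntegrable f volume (-a) a) :
    ∫ x in -a..a, f x = 2 • ∫ x in 0..a, f x := by
  have h0 : (0 : ℝ) ∈ [[-a, a]] := by
    rcases le_total 0 a with h | h <;> simp [h]
  have hleft : ∫ x in -a..0, f x = ∫ x in 0..a, f x := by
    simpa [hf] using (intervalIntegral.integral_comp_neg (a := 0) (b := a) f).symm
  rw [← intervalIntegral.integral_add_adjacent_intervals (b := 0)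
    (hint.mono_set (Set.uIcc_subset_uIcc_left h0)) (hint.mono_set (Set.uIcc_subset_uIcc_right h0)),
    hleft, two_nsmul]

theorem integral_mul_eq_half_integral_of_even {G f : ℝ → ℝ} {b : ℝ}
    (hG : ∀ x, G x = 1 - G (-x)) (hf : ∀ x, f (-x) = f x)
    (hGf : IntervalIntegrable (fun x => G x * f x) volume (-b) b)
    (hf_int : IntervalIntegrable f volume (-b) b) :
    ∫ x in -b..b, G x * f x = (∫ x in -b..b, f x) / 2 := by
  have hreflect : ∫ x in -b..b, G (-x) * f (-x) = ∫ x in -b..b, G x * f x := by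
    simpa using intervalIntegral.integral_comp_neg (a := -b) (b := b) (fun x => G x * f x)
  have hcompl : ∫ x in -b..b, G (-x) * f (-x) = ∫ x in -b..b, f x - G x * f x :=
    intervalIntegral.integral_congr fun x _ => by
      simp only [hf]
      rw [hG x]
      ring
  rw [hcompl, intervalIntegral.integral_sub hf_int hGf] at hreflect
  linarith

theorem integral_one_div_one_add_sq_mul_sq {x : ℝ} (hx : x ≠ 0) (b : ℝ) :
    ∫ y in -b..b, 1 / (1 + x ^ 2 * y ^ 2) = 2 * arctan (x * b) / x := by
  have hcomp : ∫ y in -b..b, 1 / (1 + x ^ 2 * y ^ 2) = ∫ y in -b..b, 1 / (1 + (x * y) ^ 2) := by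
    simp only [mul_pow]
  rw [hcomp, intervalIntegral.integral_comp_mul_left (fun u => 1 / (1 + u ^ 2)) hx,
    integral_one_div_one_add_sq, mul_neg, arctan_neg, smul_eq_mul]
  field_simp
  ring

theorem continuous_integral_one_div_one_add_sq_mul_sq (b : ℝ) :
    Continuous fun x : ℝ => ∫ y in -b..b, 1 / (1 + x ^ 2 * y ^ 2) :=
  intervalIntegral.continuous_parametric_intervalIntegral_of_continuous'
    (continuous_const.div (by fun_prop) fun _ => by positivity) _ _

theorem integral_integral_one_div_one_add_sq_mul_sq {a : ℝ} (ha : 0 < a) :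
    ∫ x in -a..a, ∫ y in -(1 / a)..(1 / a), 1 / (1 + x ^ 2 * y ^ 2)
      = 4 * ∑' n : ℕ, (-1 : ℝ) ^ n / (2 * n + 1) ^ 2 := by
  have hinner : ∫ x in 0..a, ∫ y in -(1 / a)..(1 / a), 1 / (1 + x ^ 2 * y ^ 2)
      = ∫ x in 0..a, 2 / a * (arctan (x / a) / (x / a)) := by
    refine intervalIntegral.integral_congr_ae (.of_forall fun x hx => ?_)
    rw [Set.uIoc_of_le ha.le] at hx
    rw [integral_one_div_one_add_sq_mul_sq hx.1.ne']
    field_simp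
  rw [intervalIntegral.integral_neg_self_eq_two_nsmul_of_even (fun x => by simp only [neg_sq])
      ((continuous_integral_one_div_one_add_sq_mul_sq _).intervalIntegrable _ _),
    hinner, intervalIntegral.integral_const_mul,
    intervalIntegral.integral_comp_div (fun t => arctan t / t) ha.ne', zero_div, div_self ha.ne',
    integral_arctan_div_self, smul_eq_mul, nsmul_eq_mul]
  field_simp
  ring

theorem catalan_double_integral_general (G₁ G₂ : ℝ → ℝ)
    (hc₁ : Continuous G₁) (hc₂ : Continuous G₂)
    (hs₁ : ∀ x, G₁ x = 1 - G₁ (-x)) (hs₂ : ∀ x, G₂ x = 1 - G₂ (-x))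
    (a : ℝ) (ha : 0 < a) :
    ∫ x in (-a)..a, ∫ y in (-(1/a))..(1/a), G₁ x * G₂ y / (1 + x^2 * y^2)
      = ∑' n : ℕ, (-1 : ℝ)^n / (2 * n + 1)^2 := by
  set K : ℝ → ℝ := fun x => ∫ y in -(1 / a)..(1 / a), 1 / (1 + x ^ 2 * y ^ 2)
  have hK : Continuous K := continuous_integral_one_div_one_add_sq_mul_sq _
  have hinner (x : ℝ) :
      ∫ y in -(1 / a)..(1 / a), G₁ x * G₂ y / (1 + x ^ 2 * y ^ 2) = G₁ x * (K x / 2) := by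
    have hf : Continuous fun y : ℝ => 1 / (1 + x ^ 2 * y ^ 2) :=
      continuous_const.div (by fun_prop) fun _ => by positivity
    rw [← integral_mul_eq_half_integral_of_even hs₂ (fun y => by simp only [neg_sq])
      ((hc₂.mul hf).intervalIntegrable _ _) (hf.intervalIntegrable _ _),
      ← intervalIntegral.integral_const_mul]
    congr 1 with y
    ring
  calc ∫ x in -a..a, ∫ y in -(1 / a)..(1 / a), G₁ x * G₂ y / (1 + x ^ 2 * y ^ 2)
      = ∫ x in -a..a, G₁ x * (K x / 2) := by simp only [hinner]
    _ = (∫ x in -a..a, K x) / 4 := by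
      rw [integral_mul_eq_half_integral_of_even hs₁ (fun x => by simp only [K, neg_sq])
        ((hc₁.mul (hK.div_const 2)).intervalIntegrable _ _)
        ((hK.div_const 2).intervalIntegrable _ _), intervalIntegral.integral_div]
      ring
    _ = ∑' n : ℕ, (-1 : ℝ) ^ n / (2 * n + 1) ^ 2 := by
      rw [integral_integral_one_div_one_add_sq_mul_sq ha]
      ring

theorem catalan_double_integral (G₁ G₂ : ℝ → ℝ)
    (hc₁ : Continuous G₁) (hc₂ : Continuous G₂)
    (hm₁ : Monotone G₁) (hm₂ : Monotone G₂)
    (hr₁ : ∀ x, G₁ x ∈ Set.Icc (0:ℝ) 1) (hr₂ : ∀ x, G₂ x ∈ Set.Icc (0:ℝ) 1)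
    (hs₁ : ∀ x, G₁ x = 1 - G₁ (-x)) (hs₂ : ∀ x, G₂ x = 1 - G₂ (-x))
    (a : ℝ) (ha : 0 < a) :
    ∫ x in (-a)..a, ∫ y in (-(1/a))..(1/a), G₁ x * G₂ y / (1 + x^2 * y^2)
      = ∑' n : ℕ, (-1 : ℝ)^n / (2 * n + 1)^2 :=
  catalan_double_integral_general G₁ G₂ hc₁ hc₂ hs₁ hs₂ a ha
end

section
/- ∫_{[0,1]⁴} (1 - 6u + u²)/(1 + u)³ dx₁ dx₂ dx₃ dx₄ = G, where u = (x₁x₂x₃x₄)² and G is Catalan's constant. -/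
/-!
Write `(T h)(v) = h(v) + 2 v h'(v)`. Since `d/dx [x h((a x)²)] = (T h)((a x)²)`, integrating
over `x ∈ [0, 1]` turns `(T h)((a x)²)` into `h(a²)`. The integrand is `(T² h₀)(u)` with
`h₀(v) = 1/(1 + v)`, so integrating out `x₄` and then `x₃` leaves
`∫₀¹ ∫₀¹ dx dy / (1 + x² y²)`. Expanding `1/(1 + x² y²) = ∑ (-1)ⁿ x²ⁿ y²ⁿ` and integrating
termwise, first in `y` and then in `x`, gives `∑ (-1)ⁿ / (2n + 1)²`.
-/

open MeasureTheory Set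

theorem integral_comp_mul_sq_add_two_mul_deriv {h h' : ℝ → ℝ}
    (hderiv : ∀ v, 0 ≤ v → HasDerivAt h (h' v) v) (hcont : ContinuousOn h' (Ici 0)) (a : ℝ) :
    ∫ x in (0:ℝ)..1, (h ((a * x) ^ 2) + 2 * (a * x) ^ 2 * h' ((a * x) ^ 2)) = h (a ^ 2) := by
  have hsq : ∀ x : ℝ, (a * x) ^ 2 ∈ Ici 0 := fun x => sq_nonneg (a * x)
  have hantideriv : ∀ x : ℝ, HasDerivAt (fun x => x * h ((a * x) ^ 2))
      (h ((a * x) ^ 2) + 2 * (a * x) ^ 2 * h' ((a * x) ^ 2)) x := fun x => by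
    have hinner := ((hasDerivAt_id' x).const_mul a).fun_pow 2
    refine ((hasDerivAt_id' x).mul ((hderiv _ (hsq x)).comp x hinner)).congr_deriv ?_
    simp only [Function.comp_apply]
    ring
  have hcont_h : ContinuousOn h (Ici 0) := fun v hv => (hderiv v hv).continuousAt.continuousWithinAt
  have hcont_sq : Continuous fun x : ℝ => (a * x) ^ 2 := by fun_prop
  rw [intervalIntegral.integral_eq_sub_of_hasDerivAt (fun x _ => hantideriv x)]
  · simp
  · refine Continuous.intervalIntegrable ?_ _ _
    exact (hcont_h.comp_continuous hcont_sq hsq).add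
      (continuous_const.mul hcont_sq |>.mul (hcont.comp_continuous hcont_sq hsq))

theorem integral_tsum_mul_pow {c : ℕ → ℝ} {e : ℕ → ℕ}
    (hc : Summable fun n => |c n| / (e n + 1)) :
    ∫ x in (0:ℝ)..1, ∑' n, c n * x ^ e n = ∑' n, c n / (e n + 1) := by
  have hterm : ∀ (b : ℝ) n, ∫ x in Ioc (0:ℝ) 1, b * x ^ e n = b / (e n + 1) := fun b n => by
    rw [integral_const_mul, ← intervalIntegral.integral_of_le zero_le_one, integral_pow]
    norm_num [div_eq_mul_inv]
  have hnorm : ∀ n, ∫ x in Ioc (0:ℝ) 1, ‖c n * x ^ e n‖ = |c n| / (e n + 1) := fun n => by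
    rw [← hterm, setIntegral_congr_fun measurableSet_Ioc fun x hx => ?_]
    simp [abs_of_pos hx.1]
  rw [intervalIntegral.integral_of_le zero_le_one,
    ← integral_tsum_of_summable_integral_norm (fun n => ?_) (by simpa only [hnorm] using hc)]
  · exact tsum_congr fun n => hterm (c n) n
  · exact (continuous_const.mul (continuous_pow _)).integrableOn_Ioc

theorem integral_one_sub_sq_div_one_add_sq_sq (b : ℝ) :
    ∫ x in (0:ℝ)..1, (1 - (b * x) ^ 2) / (1 + (b * x) ^ 2) ^ 2 = 1 / (1 + b ^ 2) := by
  have hderiv : ∀ v : ℝ, 0 ≤ v → HasDerivAt (fun v => 1 / (1 + v)) (-1 / (1 + v) ^ 2) v :=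
    fun v hv => by
      have hpos : 0 < 1 + v := by positivity
      refine ((hasDerivAt_const v (1:ℝ)).div ((hasDerivAt_id' v).const_add 1)
        hpos.ne').congr_deriv ?_
      field_simp
      ring
  have hcont : ContinuousOn (fun v : ℝ => -1 / (1 + v) ^ 2) (Ici 0) :=
    ContinuousOn.div (by fun_prop) (by fun_prop) fun v (hv : 0 ≤ v) => by positivity
  rw [← integral_comp_mul_sq_add_two_mul_deriv hderiv hcont b]
  refine intervalIntegral.integral_congr fun x _ => ?_
  have : 0 < 1 + (b * x) ^ 2 := by positivity
  field_simp
  ring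

theorem integral_one_sub_six_mul_sq_add_sq_sq_div_one_add_sq_pow_three (a : ℝ) :
    ∫ x in (0:ℝ)..1, (1 - 6 * (a * x) ^ 2 + ((a * x) ^ 2) ^ 2) / (1 + (a * x) ^ 2) ^ 3
      = (1 - a ^ 2) / (1 + a ^ 2) ^ 2 := by
  have hderiv : ∀ v : ℝ, 0 ≤ v →
      HasDerivAt (fun v => (1 - v) / (1 + v) ^ 2) ((v - 3) / (1 + v) ^ 3) v := fun v hv => by
    refine (((hasDerivAt_id' v).const_sub 1).div (((hasDerivAt_id' v).const_add 1).fun_pow 2)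
      (by positivity)).congr_deriv ?_
    field_simp
    ring
  have hcont : ContinuousOn (fun v : ℝ => (v - 3) / (1 + v) ^ 3) (Ici 0) :=
    ContinuousOn.div (by fun_prop) (by fun_prop) fun v (hv : 0 ≤ v) => by positivity
  rw [← integral_comp_mul_sq_add_two_mul_deriv hderiv hcont a]
  refine intervalIntegral.integral_congr fun x _ => ?_
  have : 0 < 1 + (a * x) ^ 2 := by positivity
  field_simp
  ring

theorem one_div_one_add_sq_mul_eq_tsum {x y : ℝ} (hxy : |x * y| < 1) :
    1 / (1 + (x * y) ^ 2) = ∑' n : ℕ, (-1) ^ n * x ^ (2 * n) * y ^ (2 * n) := by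
  have hq : ‖-(x * y) ^ 2‖ < 1 := by
    rw [norm_neg, norm_pow, Real.norm_eq_abs]
    nlinarith [abs_nonneg (x * y)]
  rw [one_div, ← sub_neg_eq_add, ← tsum_geometric_of_norm_lt_one hq]
  congr 1 with n
  ring

theorem integral_one_div_one_add_sq_mul {x : ℝ} (hx : |x| < 1) :
    ∫ y in (0:ℝ)..1, 1 / (1 + (x * y) ^ 2)
      = ∑' n : ℕ, (-1) ^ n * x ^ (2 * n) / (2 * n + 1) := by
  have hseries : EqOn (fun y => 1 / (1 + (x * y) ^ 2))
      (fun y => ∑' n : ℕ, (-1) ^ n * x ^ (2 * n) * y ^ (2 * n)) (uIcc 0 1) := fun y hy => by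
    rw [uIcc_of_le zero_le_one] at hy
    refine one_div_one_add_sq_mul_eq_tsum ?_
    rw [abs_mul]
    nlinarith [abs_nonneg x, abs_nonneg y, abs_of_nonneg hy.1 ▸ hy.2]
  have hgeom : Summable fun n : ℕ => (x ^ 2) ^ n :=
    summable_geometric_of_lt_one (sq_nonneg x) (by nlinarith [abs_nonneg x, sq_abs x])
  rw [intervalIntegral.integral_congr hseries, integral_tsum_mul_pow]
  · push_cast; rfl
  refine hgeom.of_nonneg_of_le (fun n => by positivity) fun n => ?_
  calc |(-1) ^ n * x ^ (2 * n)| / ((2 * n : ℕ) + 1 : ℝ) ≤ |(-1) ^ n * x ^ (2 * n)| :=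
        div_le_self (abs_nonneg _) (by simp)
    _ = (x ^ 2) ^ n := by
        rw [abs_mul, abs_neg_one_pow, one_mul, pow_mul, abs_of_nonneg (by positivity)]

theorem integral_integral_one_div_one_add_sq_mul :
    ∫ x in (0:ℝ)..1, ∫ y in (0:ℝ)..1, 1 / (1 + (x * y) ^ 2)
      = ∑' n : ℕ, (-1 : ℝ) ^ n / (2 * n + 1) ^ 2 := by
  have hinner : ∀ᵐ x : ℝ, x ∈ uIoc 0 1 → ∫ y in (0:ℝ)..1, 1 / (1 + (x * y) ^ 2)
      = ∑' n : ℕ, (-1) ^ n / (2 * n + 1) * x ^ (2 * n) := by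
    filter_upwards [Measure.ae_ne volume 1] with x hx1 hx
    rw [uIoc_of_le zero_le_one] at hx
    rw [integral_one_div_one_add_sq_mul (abs_lt.2 ⟨by linarith [hx.1], lt_of_le_of_ne hx.2 hx1⟩)]
    congr 1 with n
    ring
  have hsum : Summable fun n : ℕ => 1 / ((n : ℝ) + 1) ^ 2 := by
    simpa using (summable_nat_add_iff 1).2 (Real.summable_one_div_nat_pow.2 one_lt_two)
  rw [intervalIntegral.integral_congr_ae hinner, integral_tsum_mul_pow]
  · congr 1 with n
    push_cast
    field_simp
  refine hsum.of_nonneg_of_le (fun n => by positivity) fun n => ?_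
  rw [abs_div, abs_pow, abs_neg, abs_one, one_pow, abs_of_pos (by positivity), div_div]
  push_cast
  gcongr
  nlinarith

theorem catalan_quadruple_integral :
    ∫ x₁ in (0:ℝ)..1, ∫ x₂ in (0:ℝ)..1, ∫ x₃ in (0:ℝ)..1, ∫ x₄ in (0:ℝ)..1,
        (1 - 6 * (x₁ * x₂ * x₃ * x₄)^2 + ((x₁ * x₂ * x₃ * x₄)^2)^2) /
          (1 + (x₁ * x₂ * x₃ * x₄)^2)^3
      = ∑' n : ℕ, (-1 : ℝ)^n / (2 * n + 1)^2 := by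
  simp only [integral_one_sub_six_mul_sq_add_sq_sq_div_one_add_sq_pow_three,
    integral_one_sub_sq_div_one_add_sq_sq]
  exact integral_integral_one_div_one_add_sq_mul
end
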